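/- For any mutant-biased fitness graph 𝒢=(G,(m,r)), the fixation probability is a submodular set function: for all seed sets S, T ⊆ V, fp_𝒢(S) + fp_𝒢(T) ≥ fp_𝒢(S∪T) + fp_𝒢(S∩T). -/

import Mathlib

open Finset
open scoped Classical

/-- A fitness graph: a finite strongly connected weighted directed graph together with
mutant and resident fitness functions. `w u v > 0` encodes that `(u,v)` is an edge
of non-zero weight; `w u ·` is a probability distribution. -/
structure FitnessGraph (V : Type) [Fintype V] [DecidableEq V] where
  w : V → V → ℝ
  m : V → ℝ
  r : V → ℝ
  w_nonneg : ∀ u v, 0 ≤ w u v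
  w_rowsum : ∀ u, ∑ v, w u v = 1
  strongly_connected : ∀ u v : V, Relation.ReflTransGen (fun a b => 0 < w a b) u v
  m_pos : ∀ u, 0 < m u
  r_pos : ∀ u, 0 < r u

variable {V : Type} [Fintype V] [DecidableEq V]

/-- A fitness graph is mutant-biased if `m(u) ≥ r(u)` for every node `u`. -/
def FitnessGraph.MutantBiased (G : FitnessGraph V) : Prop :=
  ∀ u, G.r u ≤ G.m u

/-- The (out-)degree of a node: the number of neighbors along edges of non-zero weight. -/
noncomputable def FitnessGraph.deg (G : FitnessGraph V) (u : V) : ℕ :=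
  (Finset.univ.filter fun v => 0 < G.w u v).card

/-- A fitness graph is undirected if its edge relation is symmetric and the weights
are uniform: `w(u,v) = 1/d(u)` for every edge `(u,v)`. -/
def FitnessGraph.Undirected (G : FitnessGraph V) : Prop :=
  (∀ u v, 0 < G.w u v → 0 < G.w v u) ∧
  ∀ u v, 0 < G.w u v → G.w u v = 1 / (G.deg u : ℝ)

/-- The fitness of node `u` in configuration `X`: `m(u)` if `u` is a mutant, `r(u)` otherwise. -/
def FitnessGraph.fit (G : FitnessGraph V) (X : Finset V) (u : V) : ℝ :=
  if u ∈ X then G.m u else G.r u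

/-- Total population fitness in configuration `X`. -/
def FitnessGraph.totalFit (G : FitnessGraph V) (X : Finset V) : ℝ :=
  ∑ u, G.fit X u

/-- The configuration resulting from `X` when `u` reproduces and replaces `v`. -/
def moranNext (X : Finset V) (u v : V) : Finset V :=
  if u ∈ X then insert v X else X.erase v

/-- One-step transition probability of the Heterogeneous Moran process. -/
noncomputable def FitnessGraph.step (G : FitnessGraph V) (X Y : Finset V) : ℝ :=
  ∑ u, ∑ v, (G.fit X u / G.totalFit X) * G.w u v * (if moranNext X u v = Y then 1 else 0)

/-- `t`-step transition probability of the Heterogeneous Moran process. -/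
noncomputable def FitnessGraph.stepN (G : FitnessGraph V) : ℕ → Finset V → Finset V → ℝ
  | 0, X, Y => if X = Y then 1 else 0
  | t + 1, X, Y => ∑ Z, FitnessGraph.stepN G t X Z * G.step Z Y

/-- Fixation probability: the probability that, started from seed set `S`, the process
eventually reaches the all-mutant configuration `V`; since `V` is absorbing this equals
`⨆ t, P(X_t = V)`. -/
noncomputable def FitnessGraph.fp (G : FitnessGraph V) (S : Finset V) : ℝ :=
  ⨆ t : ℕ, G.stepN t S Finset.univ

/-!
Uniformize the Moran chain: select each node `u` with probability `m u / ∑ m` whatever its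
type, let a selected mutant always reproduce and a selected resident reproduce only with
probability `r u / m u` (this is where `r ≤ m` is needed). The resulting lazy chain has the same
fixation probabilities, and its steps apply a random map `X ↦ lazyUpdate e X` whose law does not
depend on the state. Driving copies started at `S`, `T`, `S ∩ T`, `S ∪ T` by the same noise
gives states `A`, `B`, `C`, `A ∪ B` with `C ⊆ A ∩ B`, because each `lazyUpdate e` is monotone and
commutes with unions. Whenever `A` is absorbed (`A = ∅` or `A = V`),
`[A ∪ B = V] + [C = V] ≤ [A = V] + [B = V]`. Since every nonempty configuration can grow to `V`,
a minimum principle shows that `A` is absorbed with probability one, and the inequality follows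
by taking expectations at time `t` and letting `t → ∞`.
-/

open Matrix Filter Topology

section HittingProbability

variable {α : Type*} [Fintype α] [DecidableEq α] {P Q : Matrix α α ℝ} {a : α}

theorem monotone_pow_apply_of_absorbing (hP : P ∈ rowStochastic ℝ α) (ha : P a a = 1) (x : α) :
    Monotone fun t => (P ^ t) x a := by
  refine monotone_nat_of_le_succ fun t => ?_
  rw [pow_succ, mul_apply]
  calc (P ^ t) x a = (P ^ t) x a * P a a := by rw [ha, mul_one]
    _ ≤ ∑ z, (P ^ t) x z * P z a :=
      single_le_sum (f := fun z => (P ^ t) x z * P z a)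
        (fun z _ => mul_nonneg (nonneg_of_mem_rowStochastic (pow_mem hP t))
          (nonneg_of_mem_rowStochastic hP)) (mem_univ a)

/-- Meaningful when `a` is absorbing, so that `(P ^ t) x a` increases with `t`. -/
noncomputable def hitProb (P : Matrix α α ℝ) (a x : α) : ℝ :=
  ⨆ t : ℕ, (P ^ t) x a

theorem bddAbove_range_pow_apply (hP : P ∈ rowStochastic ℝ α) (x : α) :
    BddAbove (Set.range fun t : ℕ => (P ^ t) x a) :=
  ⟨1, by rintro _ ⟨t, rfl⟩; exact le_one_of_mem_rowStochastic (pow_mem hP t)⟩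

theorem pow_apply_le_hitProb (hP : P ∈ rowStochastic ℝ α) (t : ℕ) (x : α) :
    (P ^ t) x a ≤ hitProb P a x :=
  le_ciSup (bddAbove_range_pow_apply hP x) t

theorem hitProb_nonneg (hP : P ∈ rowStochastic ℝ α) (x : α) : 0 ≤ hitProb P a x :=
  (nonneg_of_mem_rowStochastic (pow_mem hP 0)).trans (pow_apply_le_hitProb hP 0 x)

theorem one_le_hitProb_self (hP : P ∈ rowStochastic ℝ α) : 1 ≤ hitProb P a a := by
  simpa using pow_apply_le_hitProb (a := a) hP 0 a

theorem tendsto_pow_apply_hitProb (hP : P ∈ rowStochastic ℝ α) (ha : P a a = 1) (x : α) :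
    Tendsto (fun t => (P ^ t) x a) atTop (𝓝 (hitProb P a x)) :=
  tendsto_atTop_ciSup (monotone_pow_apply_of_absorbing hP ha x) (bddAbove_range_pow_apply hP x)

theorem mulVec_hitProb (hP : P ∈ rowStochastic ℝ α) (ha : P a a = 1) :
    P *ᵥ hitProb P a = hitProb P a := by
  funext x
  have hstep : Tendsto (fun t => (P ^ (t + 1)) x a) atTop (𝓝 ((P *ᵥ hitProb P a) x)) := by
    simp only [pow_succ', mul_apply]
    exact tendsto_finsetSum _ fun z _ => (tendsto_pow_apply_hitProb hP ha z).const_mul _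
  exact tendsto_nhds_unique hstep
    ((tendsto_pow_apply_hitProb hP ha x).comp (tendsto_add_atTop_nat 1))

theorem hitProb_le_of_mulVec_le (hP : P ∈ rowStochastic ℝ α) {h : α → ℝ} (h0 : 0 ≤ h)
    (ha : 1 ≤ h a) (hsup : P *ᵥ h ≤ h) : hitProb P a ≤ h := by
  intro x
  refine ciSup_le fun t => ?_
  induction t generalizing x with
  | zero =>
    rw [pow_zero, one_apply]
    split_ifs with hxa
    · exact hxa ▸ ha
    · exact h0 x
  | succ t ih =>
    rw [pow_succ', mul_apply]
    exact (sum_le_sum fun z _ => mul_le_mul_of_nonneg_left (ih z)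
      (nonneg_of_mem_rowStochastic hP)).trans (hsup x)

theorem hitProb_eq_of_lazy (hP : P ∈ rowStochastic ℝ α) (hQ : Q ∈ rowStochastic ℝ α)
    (haP : P a a = 1) (haQ : Q a a = 1) {c : α → ℝ} (hc : ∀ x, 0 < c x)
    (hQP : ∀ h x, (Q *ᵥ h) x = c x * (P *ᵥ h) x + (1 - c x) * h x) :
    hitProb Q a = hitProb P a := by
  have hQ_harmonic : Q *ᵥ hitProb P a = hitProb P a := by
    funext x
    rw [hQP, mulVec_hitProb hP haP]
    ring
  have hP_harmonic : P *ᵥ hitProb Q a = hitProb Q a := by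
    funext x
    have hx := congrFun (mulVec_hitProb hQ haQ) x
    rw [hQP] at hx
    have : c x * ((P *ᵥ hitProb Q a) x - hitProb Q a x) = 0 := by linarith
    exact sub_eq_zero.mp ((mul_eq_zero.mp this).resolve_left (hc x).ne')
  exact le_antisymm
    (hitProb_le_of_mulVec_le hQ (hitProb_nonneg hP) (one_le_hitProb_self hP) hQ_harmonic.le)
    (hitProb_le_of_mulVec_le hP (hitProb_nonneg hQ) (one_le_hitProb_self hQ) hP_harmonic.le)

theorem eq_of_reflTransGen_of_forall_le (hP : P ∈ rowStochastic ℝ α) {h : α → ℝ}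
    (hh : P *ᵥ h = h) {x y : α} (hmin : ∀ z, h x ≤ h z)
    (hxy : Relation.ReflTransGen (fun u v => 0 < P u v) x y) : h y = h x := by
  induction hxy with
  | refl => rfl
  | @tail u v _ huv ihu =>
    have hterms : ∑ z, P u z * (h z - h u) = 0 := by
      simp only [mul_sub, sum_sub_distrib, ← sum_mul, sum_row_of_mem_rowStochastic hP, one_mul]
      exact sub_eq_zero.mpr (congrFun hh u)
    have hv := (sum_eq_zero_iff_of_nonneg fun z _ => mul_nonneg
      (nonneg_of_mem_rowStochastic hP) (sub_nonneg.mpr (ihu ▸ hmin z))).mp hterms v (mem_univ v)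
    rw [← ihu]
    linarith [(mul_eq_zero.mp hv).resolve_left huv.ne']

end HittingProbability

section RandomMap

variable {ι α : Type*} [Fintype ι] [DecidableEq α]

noncomputable def randomMapMatrix (p : α → ι → ℝ) (F : ι → α → α) : Matrix α α ℝ :=
  of fun x y => ∑ e, p x e * if F e x = y then 1 else 0

variable {p : α → ι → ℝ} {F : ι → α → α}

theorem randomMapMatrix_apply_self (hp1 : ∀ x, ∑ e, p x e = 1) {a : α} (ha : ∀ e, F e a = a) :
    randomMapMatrix p F a a = 1 := by
  simp [randomMapMatrix, ha, hp1]

theorem randomMapMatrix_pos (hp0 : ∀ x e, 0 ≤ p x e) {x : α} {e : ι} (he : 0 < p x e) :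
    0 < randomMapMatrix p F x (F e x) :=
  calc 0 < p x e * if F e x = F e x then 1 else 0 := by simpa using he
    _ ≤ _ := single_le_sum (f := fun e' => p x e' * if F e' x = F e x then 1 else 0)
      (fun e' _ => mul_nonneg (hp0 x e') (by split_ifs <;> norm_num)) (mem_univ e)

variable [Fintype α]

theorem randomMapMatrix_mulVec (h : α → ℝ) (x : α) :
    (randomMapMatrix p F *ᵥ h) x = ∑ e, p x e * h (F e x) := by
  simp only [randomMapMatrix, mulVec, dotProduct, of_apply, sum_mul, mul_assoc, ite_mul,
    one_mul, zero_mul]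
  rw [sum_comm]
  simp

theorem randomMapMatrix_mem_rowStochastic (hp0 : ∀ x e, 0 ≤ p x e) (hp1 : ∀ x, ∑ e, p x e = 1) :
    randomMapMatrix p F ∈ rowStochastic ℝ α := by
  refine ⟨fun x y => sum_nonneg fun e _ => mul_nonneg (hp0 x e) (by split_ifs <;> norm_num), ?_⟩
  funext x
  simp [randomMapMatrix_mulVec, hp1]

theorem randomMapMatrix_pow_mulVec_comp {β : Type*} [Fintype β] [DecidableEq β] {p : ι → ℝ}
    {F' : ι → β → β} {π : α → β} (hπ : ∀ e x, π (F e x) = F' e (π x)) (t : ℕ) (h : β → ℝ) :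
    (randomMapMatrix (fun _ => p) F ^ t) *ᵥ (h ∘ π)
      = ((randomMapMatrix (fun _ => p) F' ^ t) *ᵥ h) ∘ π := by
  induction t generalizing h with
  | zero => simp
  | succ t ih =>
    have hstep : randomMapMatrix (fun _ => p) F *ᵥ (h ∘ π)
        = (randomMapMatrix (fun _ => p) F' *ᵥ h) ∘ π := by
      funext x
      simp [randomMapMatrix_mulVec, hπ]
    rw [pow_succ, ← mulVec_mulVec, hstep, ih, pow_succ, ← mulVec_mulVec]

end RandomMap

theorem Relation.ReflTransGen.exists_crossing {α : Type*} {r : α → α → Prop} {p : α → Prop}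
    {a b : α} (h : Relation.ReflTransGen r a b) (ha : p a) (hb : ¬p b) :
    ∃ x y, p x ∧ ¬p y ∧ r x y := by
  induction h with
  | refl => exact absurd ha hb
  | @tail c d _ hcd ih => exact if hc : p c then ⟨c, d, hc, hb, hcd⟩ else ih hc

section LazyUpdate

variable {α : Type*} [DecidableEq α]

/-- The event `(u, v, b)`: `u` is selected and, if `u` is a mutant or `b` holds, `u` reproduces
onto `v`; a selected resident with `¬b` does nothing. -/
def lazyUpdate : α × α × Bool → Finset α → Finset α
  | (u, v, b), X => if u ∈ X then insert v X else if b then X.erase v else X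

theorem lazyUpdate_mono (e : α × α × Bool) {X Y : Finset α} (h : X ⊆ Y) :
    lazyUpdate e X ⊆ lazyUpdate e Y := by
  obtain ⟨u, v, b⟩ := e
  intro x
  simp only [lazyUpdate]
  grind

theorem lazyUpdate_union (e : α × α × Bool) (X Y : Finset α) :
    lazyUpdate e (X ∪ Y) = lazyUpdate e X ∪ lazyUpdate e Y := by
  obtain ⟨u, v, b⟩ := e
  ext x
  simp only [lazyUpdate]
  grind

/-- The state `(A, B, C)` of three copies of the lazy chain; the fourth copy, started at
`S ∪ T`, is `A ∪ B` by `lazyUpdate_union`. -/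
abbrev CoupledState (α : Type*) [DecidableEq α] :=
  {q : Finset α × Finset α × Finset α // q.2.2 ⊆ q.1 ∩ q.2.1}

def coupledUpdate (e : α × α × Bool) (q : CoupledState α) : CoupledState α :=
  ⟨(lazyUpdate e q.1.1, lazyUpdate e q.1.2.1, lazyUpdate e q.1.2.2),
    (lazyUpdate_mono e q.2).trans
      (subset_inter (lazyUpdate_mono e inter_subset_left) (lazyUpdate_mono e inter_subset_right))⟩

theorem ite_union_eq_univ_add_le [Fintype α] [Nonempty α] {A B C : Finset α}
    (hC : C ⊆ A ∩ B) :
    ((if A ∪ B = univ then 1 else 0) + if C = univ then 1 else 0 : ℝ)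
      ≤ (if A = univ then 1 else 0) + (if B = univ then 1 else 0)
        + (1 - (if A = ∅ then 1 else 0) - if A = univ then 1 else 0) := by
  have hne : (∅ : Finset α) ≠ univ := univ_nonempty.ne_empty.symm
  split_ifs <;> simp_all

end LazyUpdate

namespace FitnessGraph

variable (G : FitnessGraph V)

noncomputable def moranMatrix : Matrix (Finset V) (Finset V) ℝ :=
  randomMapMatrix (fun X (e : V × V) => G.fit X e.1 / G.totalFit X * G.w e.1 e.2)
    (fun e X => moranNext X e.1 e.2)

noncomputable def lazyWeight : V × V × Bool → ℝ
  | (u, v, b) => (if b then G.r u else G.m u - G.r u) / (∑ x, G.m x) * G.w u v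

noncomputable def lazyMatrix : Matrix (Finset V) (Finset V) ℝ :=
  randomMapMatrix (fun _ => G.lazyWeight) lazyUpdate

noncomputable def coupledMatrix : Matrix (CoupledState V) (CoupledState V) ℝ :=
  randomMapMatrix (fun _ => G.lazyWeight) coupledUpdate

theorem stepN_eq_moranMatrix_pow (t : ℕ) (X Y : Finset V) :
    G.stepN t X Y = (G.moranMatrix ^ t) X Y := by
  induction t generalizing Y with
  | zero => simp [stepN, one_apply]
  | succ t ih =>
    simp only [stepN, ih, pow_succ, mul_apply]
    congr! 2
    simp [step, moranMatrix, randomMapMatrix, Fintype.sum_prod_type]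

theorem fit_pos (X : Finset V) (u : V) : 0 < G.fit X u := by
  unfold fit
  split_ifs
  exacts [G.m_pos u, G.r_pos u]

variable [Nonempty V]

theorem totalFit_pos (X : Finset V) : 0 < G.totalFit X :=
  sum_pos (fun u _ => G.fit_pos X u) univ_nonempty

theorem sum_m_pos : 0 < ∑ u, G.m u :=
  sum_pos (fun u _ => G.m_pos u) univ_nonempty

theorem moranMatrix_mem_rowStochastic : G.moranMatrix ∈ rowStochastic ℝ (Finset V) := by
  unfold moranMatrix
  refine randomMapMatrix_mem_rowStochastic (fun X e => ?_) fun X => ?_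
  · exact mul_nonneg (div_nonneg (G.fit_pos X e.1).le (G.totalFit_pos X).le) (G.w_nonneg _ _)
  · simp only [Fintype.sum_prod_type, ← mul_sum, G.w_rowsum, mul_one, ← sum_div]
    exact div_self (G.totalFit_pos X).ne'

theorem moranMatrix_apply_univ : G.moranMatrix univ univ = 1 := by
  unfold moranMatrix
  refine randomMapMatrix_apply_self (fun X => ?_) fun e => by simp [moranNext]
  simp only [Fintype.sum_prod_type, ← mul_sum, G.w_rowsum, mul_one, ← sum_div]
  exact div_self (G.totalFit_pos X).ne'

theorem lazyWeight_nonneg (hbias : G.MutantBiased) (e : V × V × Bool) : 0 ≤ G.lazyWeight e := by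
  obtain ⟨u, v, b⟩ := e
  refine mul_nonneg (div_nonneg ?_ G.sum_m_pos.le) (G.w_nonneg u v)
  cases b
  exacts [sub_nonneg.mpr (hbias u), (G.r_pos u).le]

theorem sum_lazyWeight : ∑ e, G.lazyWeight e = 1 := by
  have hb : ∀ u v, G.lazyWeight (u, v, true) + G.lazyWeight (u, v, false)
      = G.m u / (∑ x, G.m x) * G.w u v := by
    intro u v
    simp only [lazyWeight, if_true, Bool.false_eq_true, if_false]
    ring
  simp only [Fintype.sum_prod_type, Fintype.sum_bool, hb, ← mul_sum, G.w_rowsum, mul_one,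
    ← sum_div]
  exact div_self G.sum_m_pos.ne'

theorem lazyMatrix_mem_rowStochastic (hbias : G.MutantBiased) :
    G.lazyMatrix ∈ rowStochastic ℝ (Finset V) :=
  randomMapMatrix_mem_rowStochastic (fun _ => G.lazyWeight_nonneg hbias) fun _ => G.sum_lazyWeight

theorem lazyMatrix_apply_univ : G.lazyMatrix univ univ = 1 :=
  randomMapMatrix_apply_self (fun _ => G.sum_lazyWeight) fun e => by simp [lazyUpdate]

theorem lazyMatrix_apply_empty : G.lazyMatrix ∅ ∅ = 1 :=
  randomMapMatrix_apply_self (fun _ => G.sum_lazyWeight) fun e => by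
    obtain ⟨u, v, b⟩ := e
    cases b <;> simp [lazyUpdate]

theorem lazyMatrix_mulVec (h : Finset V → ℝ) (X : Finset V) :
    (G.lazyMatrix *ᵥ h) X = G.totalFit X / (∑ u, G.m u) * (G.moranMatrix *ᵥ h) X
      + (1 - G.totalFit X / ∑ u, G.m u) * h X := by
  have hM := G.sum_m_pos.ne'
  have hF := (G.totalFit_pos X).ne'
  have hb : ∀ u v, ∑ b, G.lazyWeight (u, v, b) * h (lazyUpdate (u, v, b) X)
      = G.totalFit X / (∑ u, G.m u) *
          (G.fit X u / G.totalFit X * G.w u v * h (moranNext X u v))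
        + (G.m u - G.fit X u) / (∑ u, G.m u) * G.w u v * h X := by
    intro u v
    by_cases hu : u ∈ X <;> simp [lazyWeight, lazyUpdate, moranNext, fit, hu] <;> field_simp
    ring
  have hidle : ∑ u, ∑ v, (G.m u - G.fit X u) / (∑ u, G.m u) * G.w u v * h X
      = (1 - G.totalFit X / ∑ u, G.m u) * h X := by
    simp only [← sum_mul, ← mul_sum, G.w_rowsum, mul_one, ← sum_div, sum_sub_distrib, totalFit]
    rw [sub_div, div_self hM]
  rw [lazyMatrix, moranMatrix, randomMapMatrix_mulVec, randomMapMatrix_mulVec]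
  simp only [Fintype.sum_prod_type, hb, sum_add_distrib, hidle, ← mul_sum]

theorem fp_eq_hitProb_lazyMatrix (hbias : G.MutantBiased) :
    G.fp = hitProb G.lazyMatrix univ := by
  have hmoran : G.fp = hitProb G.moranMatrix univ := by
    funext S
    simp only [fp, hitProb, stepN_eq_moranMatrix_pow]
  rw [hmoran, hitProb_eq_of_lazy G.moranMatrix_mem_rowStochastic
    (G.lazyMatrix_mem_rowStochastic hbias) G.moranMatrix_apply_univ G.lazyMatrix_apply_univ
    (fun X => div_pos (G.totalFit_pos X) G.sum_m_pos) G.lazyMatrix_mulVec]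

theorem reflTransGen_lazyMatrix_univ (hbias : G.MutantBiased) {X : Finset V}
    (hX : X.Nonempty) : Relation.ReflTransGen (fun A B => 0 < G.lazyMatrix A B) X univ := by
  refine Finset.strongDownwardInduction (n := Fintype.card V)
    (p := fun X => X.Nonempty → Relation.ReflTransGen (fun A B => 0 < G.lazyMatrix A B) X univ)
    (fun X ih _ hX => ?_) X (card_le_univ X) hX
  by_cases hXu : X = univ
  · exact hXu ▸ .refl
  obtain ⟨v, hv⟩ : ∃ v, v ∉ X := by simpa [eq_univ_iff_forall] using hXu
  obtain ⟨u, hu⟩ := hX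
  obtain ⟨a, b, ha, hb, hab⟩ := (G.strongly_connected u v).exists_crossing (p := (· ∈ X)) hu hv
  have hstep : 0 < G.lazyMatrix X (insert b X) := by
    have hweight : 0 < G.lazyWeight (a, b, true) :=
      mul_pos (div_pos (G.r_pos a) G.sum_m_pos) hab
    simpa [lazyMatrix, lazyUpdate, ha] using
      randomMapMatrix_pos (F := lazyUpdate) (fun _ => G.lazyWeight_nonneg hbias) (x := X) hweight
  exact .head hstep (ih (card_le_univ _) (ssubset_insert hb) (insert_nonempty b X))

theorem one_le_hitProb_empty_add_hitProb_univ (hbias : G.MutantBiased) (X : Finset V) :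
    1 ≤ hitProb G.lazyMatrix ∅ X + hitProb G.lazyMatrix univ X := by
  have hL := G.lazyMatrix_mem_rowStochastic hbias
  set h := hitProb G.lazyMatrix ∅ + hitProb G.lazyMatrix univ with h_def
  have hh : G.lazyMatrix *ᵥ h = h := by
    rw [h_def, mulVec_add, mulVec_hitProb hL G.lazyMatrix_apply_empty,
      mulVec_hitProb hL G.lazyMatrix_apply_univ]
  have h_empty : 1 ≤ h ∅ := le_add_of_le_of_nonneg (one_le_hitProb_self hL) (hitProb_nonneg hL _)
  have h_univ : 1 ≤ h univ := le_add_of_nonneg_of_le (hitProb_nonneg hL _) (one_le_hitProb_self hL)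
  obtain ⟨Y, hY⟩ := Finite.exists_min h
  refine le_trans ?_ (hY X)
  rcases Y.eq_empty_or_nonempty with rfl | hne
  · exact h_empty
  · rwa [← eq_of_reflTransGen_of_forall_le hL hh hY (G.reflTransGen_lazyMatrix_univ hbias hne)]

theorem lazyMatrix_pow_union_add_inter_le (hbias : G.MutantBiased) (S T : Finset V) (t : ℕ) :
    (G.lazyMatrix ^ t) (S ∪ T) univ + (G.lazyMatrix ^ t) (S ∩ T) univ
      ≤ (G.lazyMatrix ^ t) S univ + (G.lazyMatrix ^ t) T univ
        + (1 - (G.lazyMatrix ^ t) S ∅ - (G.lazyMatrix ^ t) S univ) := by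
  have hL := G.lazyMatrix_mem_rowStochastic hbias
  have hQ : G.coupledMatrix ∈ rowStochastic ℝ (CoupledState V) :=
    randomMapMatrix_mem_rowStochastic (fun _ => G.lazyWeight_nonneg hbias)
      fun _ => G.sum_lazyWeight
  let q₀ : CoupledState V := ⟨(S, T, S ∩ T), subset_rfl⟩
  let ind (a X : Finset V) : ℝ := if X = a then 1 else 0
  have hproj (π : CoupledState V → Finset V)
      (hπ : ∀ e q, π (coupledUpdate e q) = lazyUpdate e (π q)) (f : Finset V → ℝ) :
      (G.coupledMatrix ^ t *ᵥ (f ∘ π)) q₀ = (G.lazyMatrix ^ t *ᵥ f) (π q₀) :=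
    congrFun (randomMapMatrix_pow_mulVec_comp hπ t f) q₀
  have hcol (a X : Finset V) : (G.lazyMatrix ^ t *ᵥ ind a) X = (G.lazyMatrix ^ t) X a := by
    simp [ind, mulVec, dotProduct]
  have hle := nonneg_mulVec_of_mem_rowStochastic (pow_mem hQ t)
    (x := ind univ ∘ (·.1.1) + ind univ ∘ (·.1.2.1) + (1 - ind ∅ - ind univ) ∘ (·.1.1)
      - (ind univ ∘ (fun q => q.1.1 ∪ q.1.2.1) + ind univ ∘ (·.1.2.2)))
    (fun q => sub_nonneg.mpr (ite_union_eq_univ_add_le q.2)) q₀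
  rw [mulVec_sub, mulVec_add, mulVec_add, mulVec_add, Pi.sub_apply, Pi.add_apply, Pi.add_apply,
    Pi.add_apply, sub_nonneg, hproj (·.1.1) (fun _ _ => rfl), hproj (·.1.2.1) (fun _ _ => rfl),
    hproj (·.1.2.2) (fun _ _ => rfl), hproj _ (fun e q => (lazyUpdate_union e _ _).symm),
    hproj (·.1.1) (fun _ _ => rfl), mulVec_sub, mulVec_sub,
    one_vecMul_of_mem_rowStochastic (pow_mem hL t)] at hle
  simpa only [Pi.sub_apply, Pi.one_apply, hcol] using hle

end FitnessGraph

/-- On a mutant-biased fitness graph the fixation probability is a submodular set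
function: `fp(S) + fp(T) ≥ fp(S ∪ T) + fp(S ∩ T)` for all seed sets `S, T`. -/
theorem fp_submodular (G : FitnessGraph V) (hbias : G.MutantBiased) (S T : Finset V) :
    G.fp (S ∪ T) + G.fp (S ∩ T) ≤ G.fp S + G.fp T := by
  rcases isEmpty_or_nonempty V with hV | hV
  · rw [Subsingleton.elim (S ∪ T) S, Subsingleton.elim (S ∩ T) T]
  have hL := G.lazyMatrix_mem_rowStochastic hbias
  have hlim (X : Finset V) {a : Finset V} (ha : G.lazyMatrix a a = 1) :=
    tendsto_pow_apply_hitProb hL ha X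
  have hlimit := le_of_tendsto_of_tendsto'
    ((hlim (S ∪ T) G.lazyMatrix_apply_univ).add (hlim (S ∩ T) G.lazyMatrix_apply_univ))
    (((hlim S G.lazyMatrix_apply_univ).add (hlim T G.lazyMatrix_apply_univ)).add
      ((tendsto_const_nhds.sub (hlim S G.lazyMatrix_apply_empty)).sub
        (hlim S G.lazyMatrix_apply_univ)))
    (G.lazyMatrix_pow_union_add_inter_le hbias S T)
  rw [G.fp_eq_hitProb_lazyMatrix hbias]
  linarith [G.one_le_hitProb_empty_add_hitProb_univ hbias S]
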